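/- Let σ, μ, δ, δ̄ be as in the homogeneous (δ,σ)-IFS setting with supp(μ) ⊆ [0,1]. If x ∈ ℝ and ε ≥ 0 satisfy [x - δ - ε, x + ε] ∩ (δ̄ · supp(σ)) = ∅, then μ(B_ε(x)) = 0; in particular (for ε = 0) x ∉ supp(μ). -/

import Mathlib

/-!
Test the invariance identity against the tent function of height `ε` centred at `x`. For
`s ∈ supp μ ⊆ [0,1]` the point `δ s + (1 - δ) β` lies in `(1 - δ) β + [0, δ]`, so when
`(1 - δ) β ∉ [x - δ - ε, x + ε]` it is at distance at least `ε` from `x` and the tent vanishes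
there. Hence the tent has `μ`-integral zero and `μ (B_ε(x)) = 0`. For the non-membership
`x ∉ supp μ`, the gap `[x - δ, x]` is compact and `(1 - δ) · supp σ` is closed, so the gap
survives after widening it by some `r > 0`, and the first part applies with radius `r`.
-/

open MeasureTheory Metric Set

/-- The topological support of a Borel measure on ℝ. -/
def msupport (ν : MeasureTheory.Measure ℝ) : Set ℝ :=
  {x | ∀ ε > 0, 0 < ν (Metric.ball x ε)}

open scoped BoundedContinuousFunction

lemma msupport_eq_support (ν : Measure ℝ) : msupport ν = ν.support := by
  ext x
  exact nhds_basis_ball.mem_measureSupport.symm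

lemma isClosed_msupport (ν : Measure ℝ) : IsClosed (msupport ν) :=
  msupport_eq_support ν ▸ Measure.isClosed_support

lemma ae_mem_msupport (ν : Measure ℝ) : ∀ᵐ x ∂ν, x ∈ msupport ν :=
  msupport_eq_support ν ▸ Measure.support_mem_ae

lemma Icc_sub_half_add_half_subset_thickening {a b r : ℝ} (hab : a ≤ b) (hr : 0 < r) :
    Icc (a - r / 2) (b + r / 2) ⊆ thickening r (Icc a b) := by
  intro y hy
  rw [mem_thickening_iff]
  refine ⟨max a (min b y), ⟨le_max_left _ _, max_le hab (min_le_left _ _)⟩, ?_⟩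
  rw [Real.dist_eq, abs_sub_lt_iff]
  obtain ⟨hya, hyb⟩ := hy
  constructor <;> simp only [max_def, min_def] <;> split_ifs <;> linarith

lemma exists_pos_disjoint_Icc_sub_add {K : Set ℝ} (hK : IsClosed K) {a b : ℝ} (hab : a ≤ b)
    (h : Disjoint (Icc a b) K) : ∃ r > 0, Disjoint (Icc (a - r) (b + r)) K := by
  obtain ⟨r, hr, hsub⟩ :=
    isCompact_Icc.exists_thickening_subset_open hK.isOpen_compl h.subset_compl_right
  exact ⟨r / 2, half_pos hr, subset_compl_iff_disjoint_right.1
    ((Icc_sub_half_add_half_subset_thickening hab hr).trans hsub)⟩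

def tent (x ε : ℝ) : ℝ →ᵇ ℝ :=
  ofCompactSupport (fun y => max (ε - |y - x|) 0) (by fun_prop)
    (HasCompactSupport.intro (isCompact_closedBall x ε) fun y hy => by
      rw [mem_closedBall, Real.dist_eq, not_le] at hy
      exact max_eq_right (by linarith))

section Tent

variable {x ε y : ℝ}

lemma tent_nonneg : 0 ≤ tent x ε y := le_max_right _ _

lemma tent_eq_zero_of_le_abs (h : ε ≤ |y - x|) : tent x ε y = 0 :=
  max_eq_right (sub_nonpos.2 h)

lemma tent_pos_of_mem_ball (hy : y ∈ ball x ε) : 0 < tent x ε y := by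
  rw [mem_ball, Real.dist_eq] at hy
  exact lt_max_of_lt_left (sub_pos.2 hy)

lemma measure_ball_eq_zero_of_integral_tent_eq_zero {μ : Measure ℝ} [IsFiniteMeasure μ]
    (h : ∫ y, tent x ε y ∂μ = 0) : μ (ball x ε) = 0 := by
  have hae : ⇑(tent x ε) =ᵐ[μ] 0 :=
    (integral_eq_zero_iff_of_nonneg (fun _ => tent_nonneg) ((tent x ε).integrable μ)).1 h
  exact measure_mono_null (fun y hy => (tent_pos_of_mem_ball hy).ne') (ae_iff.1 hae)

end Tent

lemma le_abs_mul_add_sub_of_notMem_Icc {δ s y x ε : ℝ} (hδ : 0 ≤ δ) (hs : s ∈ Icc (0 : ℝ) 1)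
    (hy : y ∉ Icc (x - δ - ε) (x + ε)) : ε ≤ |δ * s + y - x| := by
  rw [mem_Icc, not_and_or, not_le, not_le] at hy
  have hδs₀ : 0 ≤ δ * s := mul_nonneg hδ hs.1
  have hδs₁ : δ * s ≤ δ := mul_le_of_le_one_right hδ hs.2
  rw [le_abs]
  rcases hy with hy | hy
  · right; linarith
  · left; linarith

lemma measure_ball_eq_zero_of_disjoint (σ μ : Measure ℝ) [IsFiniteMeasure μ]
    {δ : ℝ} (hδ : 0 ≤ δ) (hμ : msupport μ ⊆ Icc (0 : ℝ) 1)
    (hinv : ∀ f : BoundedContinuousFunction ℝ ℝ,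
      ∫ x, f x ∂μ = ∫ β, ∫ s, f (δ * s + (1 - δ) * β) ∂μ ∂σ)
    {x ε : ℝ}
    (hgap : Disjoint (Icc (x - δ - ε) (x + ε)) ((fun β => (1 - δ) * β) '' msupport σ)) :
    μ (ball x ε) = 0 := by
  refine measure_ball_eq_zero_of_integral_tent_eq_zero ?_
  rw [hinv]
  refine integral_eq_zero_of_ae ((ae_mem_msupport σ).mono fun β hβ => ?_)
  refine integral_eq_zero_of_ae ((ae_mem_msupport μ).mono fun s hs => ?_)
  have hβgap := disjoint_right.1 hgap ⟨β, hβ, rfl⟩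
  exact tent_eq_zero_of_le_abs (le_abs_mul_add_sub_of_notMem_Icc hδ (hμ hs) hβgap)

theorem gap_criterion_general (σ μ : Measure ℝ)
    [IsProbabilityMeasure μ]
    (δ : ℝ) (hδ0 : 0 < δ) (hδ1 : δ < 1)
    (hμ : msupport μ ⊆ Set.Icc (0:ℝ) 1)
    (hinv : ∀ f : BoundedContinuousFunction ℝ ℝ,
      ∫ x, f x ∂μ = ∫ β, ∫ s, f (δ * s + (1 - δ) * β) ∂μ ∂σ)
    (x ε : ℝ) (hε : 0 ≤ ε)
    (hdisj : Set.Icc (x - δ - ε) (x + ε) ∩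
        ((fun β => (1 - δ) * β) '' msupport σ) = ∅) :
    μ (Metric.ball x ε) = 0 ∧ x ∉ msupport μ := by
  have hgap := disjoint_iff_inter_eq_empty.2 hdisj
  have hclosed : IsClosed ((fun β => (1 - δ) * β) '' msupport σ) :=
    (Homeomorph.mulLeft₀ (1 - δ) (by linarith)).isClosedMap _ (isClosed_msupport σ)
  obtain ⟨r, hr, hgap_r⟩ := exists_pos_disjoint_Icc_sub_add hclosed (by linarith : x - δ ≤ x)
    (hgap.mono_left (Icc_subset_Icc (by linarith) (by linarith)))
  refine ⟨measure_ball_eq_zero_of_disjoint σ μ hδ0.le hμ hinv hgap, fun hx => ?_⟩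
  exact (hx r hr).ne' (measure_ball_eq_zero_of_disjoint σ μ hδ0.le hμ hinv hgap_r)

theorem gap_criterion (σ μ : Measure ℝ)
    [IsProbabilityMeasure σ] [IsProbabilityMeasure μ]
    (δ : ℝ) (hδ0 : 0 < δ) (hδ1 : δ < 1)
    (hσ : msupport σ ⊆ Set.Icc (0:ℝ) 1) (hμ : msupport μ ⊆ Set.Icc (0:ℝ) 1)
    (hinv : ∀ f : BoundedContinuousFunction ℝ ℝ,
      ∫ x, f x ∂μ = ∫ β, ∫ s, f (δ * s + (1 - δ) * β) ∂μ ∂σ)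
    (x ε : ℝ) (hε : 0 ≤ ε)
    (hdisj : Set.Icc (x - δ - ε) (x + ε) ∩
        ((fun β => (1 - δ) * β) '' msupport σ) = ∅) :
    μ (Metric.ball x ε) = 0 ∧ x ∉ msupport μ :=
  gap_criterion_general σ μ δ hδ0 hδ1 hμ hinv x ε hε hdisj
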